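/- arXiv:2506.05492 — 3 statements merged into one kernel-verified Lean document; each statement's English description precedes it below -/
import Mathlib

section
/- Let q ∈ (0,1), n ≥ 1 an integer, and let a, b be real numbers with 0 < aq < 1 and b < 0. Then p_n(x; a, b) ≺ p_n(x; a, q²b): both degree-n polynomials have all zeros real, simple and positive, and, listing zeros in increasing order, λ_1(p_n(·;a,b)) < λ_1(p_n(·;a,q²b)) < λ_2(p_n(·;a,b)) < λ_2(p_n(·;a,q²b)) < ⋯ < λ_n(p_n(·;a,b)) < λ_n(p_n(·;a,q²b)). -/
/-- The q-Pochhammer symbol `(a;q)_k = ∏_{j=0}^{k-1} (1 - a q^j)`. -/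
noncomputable def qPoch (q a : ℝ) (k : ℕ) : ℝ :=
  ∏ j ∈ Finset.range k, (1 - a * q ^ j)

/-- The little q-Jacobi polynomial
`p_n(x; a, b) = ∑_{k=0}^{n} [(q^{−n};q)_k (a b q^{n+1};q)_k / ((a q;q)_k (q;q)_k)] (q x)^k`. -/
noncomputable def littleQJacobi (q a b : ℝ) (n : ℕ) : Polynomial ℝ :=
  ∑ k ∈ Finset.range (n + 1),
    Polynomial.C (qPoch q (q ^ (-(n : ℤ))) k * qPoch q (a * b * q ^ (n + 1)) k /
      (qPoch q (a * q) k * qPoch q q k)) * (Polynomial.C q * Polynomial.X) ^ k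

/-!
For `c < 0` every `p_n(·; a, c)` has degree `n`, value `1` at `0` and leading coefficient of sign
`(-1)^n`. Contiguous relations express a multiple of `p_{n+1}(·; a, c)` as `P g + Q h`, where
`g, h` are little `q`-Jacobi polynomials with interlacing positive zeros and `P > 0 > Q` on
`(0, ∞)`. At the zeros of `g` and `h` this forces `n + 1` sign changes of `p_{n+1}` on disjoint
intervals, which locates all of its zeros. An induction on `n` through the relations linking
the parameters `c` and `q c` gives `p_n(c) ≺ p_n(q c)` together with the interlacing of
`p_{n+1}(c)` and `p_n(c)`; eliminating the parameter `q b` between these relations yields one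
linking `b` and `q² b`, and hence `p_n(b) ≺ p_n(q² b)`.
-/

open Polynomial

section RealRoots

structure HasSortedPosRoots (f : ℝ[X]) (n : ℕ) (x : ℕ → ℝ) : Prop where
  natDegree_eq : f.natDegree = n
  neg_one_pow_mul_leadingCoeff_pos : 0 < (-1) ^ n * f.leadingCoeff
  roots_eq : f.roots = (Multiset.range n).map x
  strictMonoOn : StrictMonoOn x (Set.Iio n)
  pos : ∀ i < n, 0 < x i

def Interlacing (n : ℕ) (x u : ℕ → ℝ) : Prop :=
  ∀ i < n, x i < u i ∧ u i < x (i + 1)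

/-- The relation `≺` of the statement, on the first `n` terms. -/
def Precedes (n : ℕ) (u z : ℕ → ℝ) : Prop :=
  ∀ i < n, u i < z i ∧ (i + 1 < n → z i < u (i + 1))

namespace HasSortedPosRoots

variable {f : ℝ[X]} {n : ℕ} {x : ℕ → ℝ}

theorem of_natDegree_eq_zero (hdeg : f.natDegree = 0) (hlc : 0 < f.leadingCoeff) (x : ℕ → ℝ) :
    HasSortedPosRoots f 0 x where
  natDegree_eq := hdeg
  neg_one_pow_mul_leadingCoeff_pos := by simpa using hlc
  roots_eq := by simpa [← Multiset.card_eq_zero, hdeg] using card_roots' f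
  strictMonoOn := fun i hi => absurd hi i.not_lt_zero
  pos := fun i hi => absurd hi i.not_lt_zero

theorem isRoot (hf : HasSortedPosRoots f n x) {i : ℕ} (hi : i < n) : f.IsRoot (x i) := by
  have hf0 : f ≠ 0 := fun h => by simpa [h] using hf.neg_one_pow_mul_leadingCoeff_pos
  exact (mem_roots hf0).1 (hf.roots_eq ▸ Multiset.mem_map_of_mem x (Multiset.mem_range.2 hi))

theorem eval_eq (hf : HasSortedPosRoots f n x) (t : ℝ) :
    f.eval t = f.leadingCoeff * ∏ i ∈ Finset.range n, (t - x i) := by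
  have hcard : Multiset.card f.roots = f.natDegree := by simp [hf.roots_eq, hf.natDegree_eq]
  conv_lhs => rw [← C_leadingCoeff_mul_prod_multiset_X_sub_C hcard]
  simp [eval_multiset_prod, hf.roots_eq, Multiset.map_map, Finset.prod_eq_multiset_prod]

theorem sign_eval (hf : HasSortedPosRoots f n x) {t : ℝ} {j : ℕ} (hj : j ≤ n)
    (hlo : ∀ i, i + 1 = j → x i < t) (hhi : j < n → t < x j) : 0 < (-1) ^ j * f.eval t := by
  have hbelow : ∀ i ∈ Finset.range j, 0 < t - x i := fun i hi => by
    have hi := Finset.mem_range.1 hi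
    have : x i ≤ x (j - 1) :=
      hf.strictMonoOn.monotoneOn (by simp; omega) (by simp; omega) (by omega)
    linarith [hlo (j - 1) (by omega)]
  have habove : ∀ i ∈ Finset.Ico j n, 0 < x i - t := fun i hi => by
    have hi := Finset.mem_Ico.1 hi
    have : x j ≤ x i := hf.strictMonoOn.monotoneOn (by simp; omega) (by simp; omega) hi.1
    linarith [hhi (by omega)]
  have key : (-1) ^ j * f.eval t = (-1) ^ n * f.leadingCoeff *
      ((∏ i ∈ Finset.range j, (t - x i)) * ∏ i ∈ Finset.Ico j n, (x i - t)) := by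
    have hneg := Finset.prod_neg (s := Finset.Ico j n) fun i => x i - t
    simp only [neg_sub, Nat.card_Ico] at hneg
    rw [hf.eval_eq, ← Finset.prod_range_mul_prod_Ico _ hj, hneg, ← Nat.add_sub_cancel' hj,
      pow_add, Nat.add_sub_cancel_left]
    ring
  rw [key]
  exact mul_pos hf.neg_one_pow_mul_leadingCoeff_pos
    (mul_pos (Finset.prod_pos hbelow) (Finset.prod_pos habove))

theorem roots_eq_ofFn (hf : HasSortedPosRoots f n x) :
    f.roots = ↑(List.ofFn fun i : Fin n => x i) := by
  rw [hf.roots_eq, List.ofFn_eq_map, ← Multiset.coe_range, Multiset.map_coe,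
    ← List.map_coe_finRange_eq_range, List.map_map]
  rfl

end HasSortedPosRoots

theorem exists_isRoot_mem_Ioo_of_neg_one_pow {f : ℝ[X]} {a b : ℝ} {i : ℕ} (hab : a < b)
    (ha : 0 < (-1) ^ i * f.eval a) (hb : 0 < (-1) ^ (i + 1) * f.eval b) :
    ∃ y ∈ Set.Ioo a b, f.IsRoot y := by
  have hcont : ContinuousOn (fun t => (-1) ^ i * f.eval t) (Set.Icc a b) := by fun_prop
  obtain ⟨y, hy, hy0⟩ := intermediate_value_Ioo' hab.le hcont
    ⟨by rw [pow_succ] at hb; linarith, ha⟩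
  exact ⟨y, hy, (mul_eq_zero.1 hy0).resolve_left (pow_ne_zero _ (by norm_num))⟩

theorem exists_roots_eq_of_sign_changes {f : ℝ[X]} {n : ℕ} (hdeg : f.natDegree ≤ n)
    {a b : ℕ → ℝ} (hab : ∀ i < n, a i < b i) (hba : ∀ i, i + 1 < n → b i ≤ a (i + 1))
    (hfa : ∀ i < n, 0 < (-1) ^ i * f.eval (a i))
    (hfb : ∀ i < n, 0 < (-1) ^ (i + 1) * f.eval (b i)) :
    ∃ x : ℕ → ℝ, f.roots = (Multiset.range n).map x ∧ StrictMonoOn x (Set.Iio n) ∧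
      ∀ i < n, a i < x i ∧ x i < b i := by
  have hroot (i : ℕ) : ∃ y, i < n → y ∈ Set.Ioo (a i) (b i) ∧ f.IsRoot y := by
    by_cases hi : i < n
    · obtain ⟨y, hy, hfy⟩ :=
        exists_isRoot_mem_Ioo_of_neg_one_pow (hab i hi) (hfa i hi) (hfb i hi)
      exact ⟨y, fun _ => ⟨hy, hfy⟩⟩
    · exact ⟨0, fun h => absurd h hi⟩
  choose x hx using hroot
  have hmono : StrictMonoOn x (Set.Iio n) :=
    strictMonoOn_of_lt_add_one Set.ordConnected_Iio fun i _ hi hi1 =>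
      ((hx i hi).1.2.trans_le (hba i hi1)).trans (hx (i + 1) hi1).1.1
  refine ⟨x, Eq.symm (Multiset.eq_of_le_of_card_le ?_ ?_), hmono, fun i hi => (hx i hi).1⟩
  · have hnodup : ((Multiset.range n).map x).Nodup :=
      (Multiset.nodup_range n).map_on fun i hi j hj hij =>
        hmono.injOn (by simpa using hi) (by simpa using hj) hij
    refine (Multiset.le_iff_subset hnodup).2 fun y hy => ?_
    obtain ⟨i, hi, rfl⟩ := Multiset.mem_map.1 hy
    have hi := Multiset.mem_range.1 hi
    refine mem_roots'.2 ⟨fun h0 => ?_, (hx i hi).2⟩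
    simpa [h0] using hfa i hi
  · simpa using (card_roots' f).trans hdeg

theorem exists_gt_neg_one_pow_mul_eval_pos {f : ℝ[X]} {n : ℕ} (hn : 0 < n)
    (hdeg : f.natDegree = n) (hlc : 0 < (-1) ^ n * f.leadingCoeff) (B : ℝ) :
    ∃ t > B, 0 < (-1) ^ n * f.eval t := by
  have hsign : ((-1 : ℝ) ^ n) ≠ 0 := pow_ne_zero _ (by norm_num)
  have hdeg' : 0 < (C ((-1 : ℝ) ^ n) * f).degree := by
    rw [← natDegree_pos_iff_degree_pos, natDegree_C_mul hsign, hdeg]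
    exact hn
  have hlc' : 0 ≤ (C ((-1 : ℝ) ^ n) * f).leadingCoeff := by
    rw [leadingCoeff_mul, leadingCoeff_C]
    exact hlc.le
  obtain ⟨t, ht, hBt⟩ :=
    (((tendsto_atTop_of_leadingCoeff_nonneg _ hdeg' hlc').eventually_gt_atTop 0).and
      (Filter.eventually_gt_atTop B)).exists
  exact ⟨t, hBt, by simpa using ht⟩

end RealRoots

section ThreeTermRelation

variable {f g h P Q : ℝ[X]} {A : ℝ}

theorem neg_one_pow_succ_mul_eval_pos_of_isRoot_left (hrel : C A * f = P * g + Q * h)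
    (hA : 0 < A) {t : ℝ} (hg : g.IsRoot t) (hQ : Q.eval t < 0) {j : ℕ}
    (hh : 0 < (-1) ^ j * h.eval t) : 0 < (-1) ^ (j + 1) * f.eval t := by
  have ht := congrArg (eval t) hrel
  simp only [eval_mul, eval_add, eval_C, hg.eq_zero, mul_zero, zero_add] at ht
  refine pos_of_mul_pos_right ?_ hA.le
  calc 0 < -Q.eval t * ((-1) ^ j * h.eval t) := mul_pos (neg_pos.2 hQ) hh
    _ = A * ((-1) ^ (j + 1) * f.eval t) := by rw [pow_succ]; linear_combination (-1) ^ j * ht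

theorem neg_one_pow_mul_eval_pos_of_isRoot_right (hrel : C A * f = P * g + Q * h)
    (hA : 0 < A) {t : ℝ} (hh : h.IsRoot t) (hP : 0 < P.eval t) {j : ℕ}
    (hg : 0 < (-1) ^ j * g.eval t) : 0 < (-1) ^ j * f.eval t := by
  have ht := congrArg (eval t) hrel
  simp only [eval_mul, eval_add, eval_C, hh.eq_zero, mul_zero, add_zero] at ht
  refine pos_of_mul_pos_right ?_ hA.le
  calc 0 < P.eval t * ((-1) ^ j * g.eval t) := mul_pos hP hg
    _ = A * ((-1) ^ j * f.eval t) := by linear_combination (-(-1) ^ j) * ht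

theorem exists_precedes_of_relation {n : ℕ} {x u : ℕ → ℝ}
    (hg : HasSortedPosRoots g (n + 1) x) (hh : HasSortedPosRoots h n u) (hxu : Interlacing n x u)
    (hrel : C A * f = P * g + Q * h)
    (hA : 0 < A) (hP : ∀ t > 0, 0 < P.eval t) (hQ : ∀ t > 0, Q.eval t < 0)
    (hdeg : f.natDegree = n + 1) (hlc : 0 < (-1) ^ (n + 1) * f.leadingCoeff)
    (hf0 : 0 < f.eval 0) :
    ∃ y, HasSortedPosRoots f (n + 1) y ∧ Precedes (n + 1) y x := by
  have hfx : ∀ i < n + 1, 0 < (-1) ^ (i + 1) * f.eval (x i) := fun i hi =>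
    neg_one_pow_succ_mul_eval_pos_of_isRoot_left hrel hA (hg.isRoot hi) (hQ _ (hg.pos i hi))
      (hh.sign_eval (by omega) (fun k hk => hk ▸ (hxu k (by omega)).2) (fun hin => (hxu i hin).1))
  have hfu : ∀ i < n, 0 < (-1) ^ (i + 1) * f.eval (u i) := fun i hi =>
    neg_one_pow_mul_eval_pos_of_isRoot_right hrel hA (hh.isRoot hi) (hP _ (hh.pos i hi))
      (hg.sign_eval (by omega) (fun k hk => Nat.succ_injective hk ▸ (hxu i hi).1)
        (fun _ => (hxu i hi).2))
  -- The `i`-th zero of `f` is located in `(u (i - 1), x i)`, reading `u (-1)` as `0`.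
  obtain ⟨y, hroots, hmono, hy⟩ := exists_roots_eq_of_sign_changes (b := x)
    (a := fun | 0 => 0 | i + 1 => u i) hdeg.le
    (fun | 0, _ => hg.pos 0 (by omega) | i + 1, hi => (hxu i (by omega)).2)
    (fun i hi => (hxu i (by omega)).1.le)
    (fun | 0, _ => by simpa using hf0 | i + 1, hi => hfu i (by omega))
    hfx
  refine ⟨y, ⟨hdeg, hlc, hroots, hmono, fun i hi => ?_⟩, fun i hi =>
    ⟨(hy i hi).2, fun hi' => (hxu i (by omega)).1.trans (hy (i + 1) hi').1⟩⟩
  rcases i with _ | i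
  · exact (hy 0 hi).1
  · exact (hh.pos i (by omega)).trans (hy (i + 1) hi).1

theorem exists_interlacing_of_relation {n : ℕ} {u z : ℕ → ℝ} (hg : HasSortedPosRoots g n u)
    (hh : HasSortedPosRoots h n z) (huz : Precedes n u z) (hrel : C A * f = P * g + Q * h)
    (hA : 0 < A) (hP : ∀ t > 0, 0 < P.eval t) (hQ : ∀ t > 0, Q.eval t < 0)
    (hdeg : f.natDegree = n + 1) (hlc : 0 < (-1) ^ (n + 1) * f.leadingCoeff)
    (hf0 : 0 < f.eval 0) :
    ∃ x, HasSortedPosRoots f (n + 1) x ∧ Interlacing n x u := by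
  have hfu : ∀ i < n, 0 < (-1) ^ (i + 1) * f.eval (u i) := fun i hi =>
    neg_one_pow_succ_mul_eval_pos_of_isRoot_left hrel hA (hg.isRoot hi) (hQ _ (hg.pos i hi))
      (hh.sign_eval hi.le (fun k hk => hk ▸ (huz k (by omega)).2 (by omega))
        (fun _ => (huz i hi).1))
  have hfz : ∀ i < n, 0 < (-1) ^ (i + 1) * f.eval (z i) := fun i hi =>
    neg_one_pow_mul_eval_pos_of_isRoot_right hrel hA (hh.isRoot hi) (hP _ (hh.pos i hi))
      (hg.sign_eval hi (fun k hk => Nat.succ_injective hk ▸ (huz i hi).1) (huz i hi).2)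
  -- The `i`-th zero of `f` is located in `(z (i - 1), u i)`, reading `z (-1)` as `0` and `u n`
  -- as a point `t` beyond all zeros of `g` and `h`.
  let a : ℕ → ℝ := fun | 0 => 0 | i + 1 => z i
  have ha : ∀ i < n + 1, 0 ≤ a i := fun
    | 0, _ => le_rfl
    | i + 1, hi => (hh.pos i (by omega)).le
  obtain ⟨t, hta, hft⟩ := exists_gt_neg_one_pow_mul_eval_pos n.succ_pos hdeg hlc (a n)
  obtain ⟨x, hroots, hmono, hx⟩ := exists_roots_eq_of_sign_changes (a := a)
    (b := Function.update u n t) hdeg.le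
    (fun i hi => by
      rcases (show i < n ∨ i = n by omega) with hi | rfl
      · rw [Function.update_of_ne hi.ne]
        rcases i with _ | i
        · exact hg.pos 0 hi
        · exact (huz i (by omega)).2 hi
      · simpa using hta)
    (fun i hi => by
      simpa [Function.update_of_ne (show i ≠ n by omega)] using (huz i (by omega)).1.le)
    (fun | 0, _ => by simpa using hf0 | i + 1, hi => hfz i (by omega))
    (fun i hi => by
      rcases (show i < n ∨ i = n by omega) with hi | rfl
      · simpa [Function.update_of_ne hi.ne] using hfu i hi
      · simpa using hft)
  refine ⟨x, ⟨hdeg, hlc, hroots, hmono, fun i hi => (ha i hi).trans_lt (hx i hi).1⟩,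
    fun i hi => ⟨?_, (huz i hi).1.trans (hx (i + 1) (by omega)).1⟩⟩
  simpa [Function.update_of_ne hi.ne] using (hx i (by omega)).2

end ThreeTermRelation

section QPochhammer

variable {q : ℝ}

theorem qPoch_succ (q α : ℝ) (k : ℕ) : qPoch q α (k + 1) = qPoch q α k * (1 - α * q ^ k) :=
  Finset.prod_range_succ _ _

theorem qPoch_succ' (q α : ℝ) (k : ℕ) :
    qPoch q α (k + 1) = (1 - α) * qPoch q (α * q) k := by
  rw [qPoch, qPoch, Finset.prod_range_succ', pow_zero, mul_one, mul_comm]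
  exact congrArg _ (Finset.prod_congr rfl fun j _ => by ring)

theorem qPoch_mul_one_sub (q α : ℝ) (k : ℕ) :
    qPoch q α k * (1 - α * q ^ k) = (1 - α) * qPoch q (α * q) k := by
  rw [← qPoch_succ, qPoch_succ']

theorem qPoch_pos {α : ℝ} {k : ℕ} (h : ∀ j < k, α * q ^ j < 1) : 0 < qPoch q α k :=
  Finset.prod_pos fun j hj => sub_pos.2 (h j (Finset.mem_range.1 hj))

theorem qPoch_ne_zero {α : ℝ} {k : ℕ} (h : ∀ j < k, α * q ^ j ≠ 1) : qPoch q α k ≠ 0 :=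
  Finset.prod_ne_zero_iff.2 fun j hj => sub_ne_zero.2 (h j (Finset.mem_range.1 hj)).symm

theorem zpow_neg_natCast_mul_pow (hq : q ≠ 0) (n : ℕ) : q ^ (-(n : ℤ)) * q ^ n = 1 := by
  simp [zpow_neg, hq]

theorem zpow_neg_natCast_eq_mul (hq : q ≠ 0) (n : ℕ) :
    q ^ (-(n : ℤ)) = q ^ (-((n + 1 : ℕ) : ℤ)) * q := by
  rw [← zpow_add_one₀ hq]
  push_cast
  ring_nf

theorem qPoch_zpow_neg_eq_zero (hq : q ≠ 0) {n k : ℕ} (h : n < k) :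
    qPoch q (q ^ (-(n : ℤ))) k = 0 :=
  Finset.prod_eq_zero (Finset.mem_range.2 h) (by rw [zpow_neg_natCast_mul_pow hq, sub_self])

theorem neg_one_pow_mul_qPoch_zpow_neg_pos (hq0 : 0 < q) (hq1 : q < 1) (n : ℕ) :
    0 < (-1) ^ n * qPoch q (q ^ (-(n : ℤ))) n := by
  have hneg := Finset.prod_neg (s := Finset.range n) fun j => 1 - q ^ (-(n : ℤ)) * q ^ j
  rw [Finset.card_range] at hneg
  rw [qPoch, ← hneg]
  refine Finset.prod_pos fun j hj => ?_
  have : 1 < q ^ (-(n : ℤ)) * q ^ j := by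
    rw [← zpow_natCast, ← zpow_add₀ hq0.ne']
    exact one_lt_zpow_of_neg₀ hq0 hq1 (by have := Finset.mem_range.1 hj; omega)
  linarith

end QPochhammer

section LittleQJacobi

variable {q a : ℝ}

theorem mul_pow_succ_lt_one (hq0 : 0 < q) (hq1 : q < 1) (ha : 0 < a) (haq : a * q < 1) (j : ℕ) :
    a * q ^ (j + 1) < 1 :=
  lt_of_le_of_lt (mul_le_mul_of_nonneg_left (pow_le_of_le_one hq0.le hq1.le (by omega)) ha.le)
    (by simpa using haq)

theorem coeff_littleQJacobi (hq : q ≠ 0) (b : ℝ) (n k : ℕ) :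
    (littleQJacobi q a b n).coeff k =
      qPoch q (q ^ (-(n : ℤ))) k * qPoch q (a * b * q ^ (n + 1)) k /
        (qPoch q (a * q) k * qPoch q q k) * q ^ k := by
  simp only [littleQJacobi, finsetSum_coeff, mul_pow, ← C_pow, ← mul_assoc, ← C_mul,
    coeff_C_mul_X_pow, Finset.sum_ite_eq, Finset.mem_range]
  split_ifs with hk
  · rfl
  · rw [qPoch_zpow_neg_eq_zero hq (by omega)]
    simp

theorem coeff_zero_littleQJacobi (hq : q ≠ 0) (b : ℝ) (n : ℕ) :
    (littleQJacobi q a b n).coeff 0 = 1 := by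
  simp [coeff_littleQJacobi hq, qPoch]

theorem eval_zero_littleQJacobi (hq : q ≠ 0) (b : ℝ) (n : ℕ) :
    (littleQJacobi q a b n).eval 0 = 1 := by
  rw [← coeff_zero_eq_eval_zero, coeff_zero_littleQJacobi hq]

theorem natDegree_littleQJacobi_le (hq : q ≠ 0) (b : ℝ) (n : ℕ) :
    (littleQJacobi q a b n).natDegree ≤ n :=
  natDegree_le_iff_coeff_eq_zero.2 fun k hk => by
    rw [coeff_littleQJacobi hq, qPoch_zpow_neg_eq_zero hq (by exact_mod_cast hk)]
    simp

theorem neg_one_pow_mul_coeff_littleQJacobi_pos (hq0 : 0 < q) (hq1 : q < 1) (ha : 0 < a)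
    (haq : a * q < 1) {c : ℝ} (hc : c < 0) (n : ℕ) :
    0 < (-1) ^ n * (littleQJacobi q a c n).coeff n := by
  have hac : a * c * q ^ (n + 1) < 0 :=
    mul_neg_of_neg_of_pos (mul_neg_of_pos_of_neg ha hc) (pow_pos hq0 _)
  have h₁ : 0 < qPoch q (a * c * q ^ (n + 1)) n :=
    qPoch_pos fun j _ => (mul_neg_of_neg_of_pos hac (pow_pos hq0 j)).trans one_pos
  have h₂ : 0 < qPoch q (a * q) n :=
    qPoch_pos fun j _ => by
      simpa [mul_assoc, ← pow_succ'] using mul_pow_succ_lt_one hq0 hq1 ha haq j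
  have h₃ : 0 < qPoch q q n :=
    qPoch_pos fun j _ => by simpa [← pow_succ'] using pow_lt_one₀ hq0.le hq1 j.succ_ne_zero
  have := neg_one_pow_mul_qPoch_zpow_neg_pos hq0 hq1 n
  rw [coeff_littleQJacobi hq0.ne', ← mul_assoc, ← mul_div_assoc, ← mul_assoc]
  positivity

theorem natDegree_littleQJacobi (hq0 : 0 < q) (hq1 : q < 1) (ha : 0 < a) (haq : a * q < 1)
    {c : ℝ} (hc : c < 0) (n : ℕ) : (littleQJacobi q a c n).natDegree = n :=
  le_antisymm (natDegree_littleQJacobi_le hq0.ne' c n) (le_natDegree_of_ne_zero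
    (right_ne_zero_of_mul (neg_one_pow_mul_coeff_littleQJacobi_pos hq0 hq1 ha haq hc n).ne'))

theorem neg_one_pow_mul_leadingCoeff_littleQJacobi_pos (hq0 : 0 < q) (hq1 : q < 1) (ha : 0 < a)
    (haq : a * q < 1) {c : ℝ} (hc : c < 0) (n : ℕ) :
    0 < (-1) ^ n * (littleQJacobi q a c n).leadingCoeff := by
  rw [leadingCoeff, natDegree_littleQJacobi hq0 hq1 ha haq hc]
  exact neg_one_pow_mul_coeff_littleQJacobi_pos hq0 hq1 ha haq hc n

theorem littleQJacobi_succ_contiguous_q_mul (hq : q ≠ 0) (c : ℝ) (M : ℕ) :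
    C (1 - a * c * q ^ (2 * M + 3)) * littleQJacobi q a c (M + 1) =
      C (1 - a * c * q ^ (M + 2)) * littleQJacobi q a (q * c) (M + 1) +
        C (a * c * q ^ (M + 2) * (1 - q ^ (M + 1))) * littleQJacobi q a (q * c) M := by
  ext k
  simp only [coeff_add, coeff_C_mul, coeff_littleQJacobi hq]
  rw [zpow_neg_natCast_eq_mul hq M,
    show a * (q * c) * q ^ (M + 1 + 1) = a * c * q ^ (M + 2) * q by ring,
    show a * (q * c) * q ^ (M + 1) = a * c * q ^ (M + 2) by ring]
  have hX := zpow_neg_natCast_mul_pow hq (M + 1)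
  set X := q ^ (-((M + 1 : ℕ) : ℤ))
  set Y := a * c * q ^ (M + 2)
  have hX' := qPoch_mul_one_sub q X k
  have hY' := qPoch_mul_one_sub q Y k
  -- `1 - q ^ (M + 1) = -q ^ (M + 1) * (1 - X)` turns the last term into a multiple of `hX'`.
  linear_combination (q ^ k / (qPoch q (a * q) k * qPoch q q k)) *
    (qPoch q X k * hY' - Y * q ^ (M + 1) * qPoch q Y k * hX' +
      Y * qPoch q Y k * (qPoch q (X * q) k - q ^ k * qPoch q X k) * hX)

theorem littleQJacobi_succ_contiguous_self (hq : q ≠ 0) (hq1 : ∀ j, q ^ (j + 1) ≠ 1)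
    (haq : ∀ j, a * q ^ (j + 1) ≠ 1) (c : ℝ) (M : ℕ) :
    C (-(c * q ^ (M + 1) * (1 - a * q ^ (M + 1)))) * littleQJacobi q a c (M + 1) =
      C (1 - c * q ^ (M + 1)) * littleQJacobi q a c M +
        C (-(1 - a * c * q ^ (2 * M + 2))) * (1 - C (c * q) * X) * littleQJacobi q a (q * c) M := by
  ext k
  simp only [coeff_add, mul_assoc, coeff_C_mul, sub_mul, one_mul, coeff_sub]
  rcases k with _ | j
  · simp only [coeff_zero_littleQJacobi hq, mul_coeff_zero, coeff_X_zero, zero_mul, mul_zero]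
    ring
  simp only [coeff_X_mul, coeff_littleQJacobi hq]
  rw [zpow_neg_natCast_eq_mul hq M, show M + 1 + 1 = M + 2 from rfl,
    show a * (q * c) * q ^ (M + 1) = a * c * q ^ (M + 2) by ring,
    qPoch_succ' q (q ^ _), qPoch_succ q (q ^ _ * q), qPoch_succ q (a * c * q ^ (M + 2)),
    qPoch_succ' q (a * c * q ^ (M + 1)), qPoch_succ q (a * q), qPoch_succ q q,
    show a * c * q ^ (M + 1) * q = a * c * q ^ (M + 2) by ring]
  have h₁ : 1 - a * q * q ^ j ≠ 0 := by
    rw [mul_assoc, ← pow_succ']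
    exact sub_ne_zero.2 (haq j).symm
  have h₂ : 1 - q * q ^ j ≠ 0 := by
    rw [← pow_succ']
    exact sub_ne_zero.2 (hq1 j).symm
  have hT : qPoch q (a * q) j ≠ 0 :=
    qPoch_ne_zero fun i _ => by rw [mul_assoc, ← pow_succ']; exact haq i
  have hU : qPoch q q j ≠ 0 := qPoch_ne_zero fun i _ => by rw [← pow_succ']; exact hq1 i
  simp only [zpow_neg, zpow_natCast]
  field_simp
  ring

theorem littleQJacobi_succ_contiguous_q_sq_mul (hq : q ≠ 0) (hq1 : ∀ j, q ^ (j + 1) ≠ 1)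
    (haq : ∀ j, a * q ^ (j + 1) ≠ 1) {b : ℝ} (M : ℕ) (hb : a * b * q ^ (2 * M + 3) ≠ 1) :
    C ((1 - a * b * q ^ (2 * M + 4)) * (1 - b * q ^ (M + 2))) * littleQJacobi q a b (M + 1) =
      C ((1 - a * b * q ^ (M + 3)) * (1 - b * q ^ (M + 2) * (1 + a) + a * b * q ^ (2 * M + 3))) *
          littleQJacobi q a (q ^ 2 * b) (M + 1) +
        (C (a * b * q ^ (M + 2) * (1 - q ^ (M + 1)) * (1 + q - b * q ^ (M + 3) * (1 + a))) -
          C (a * b ^ 2 * q ^ (M + 4) * (1 - q ^ (M + 1)) * (1 - a * b * q ^ (2 * M + 4))) * X) *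
          littleQJacobi q a (q ^ 2 * b) M := by
  have e₁ := littleQJacobi_succ_contiguous_q_mul (a := a) hq b M
  have e₂ := littleQJacobi_succ_contiguous_q_mul (a := a) hq (q * b) M
  have e₃ := littleQJacobi_succ_contiguous_self hq hq1 haq (q * b) M
  rw [show q * (q * b) = q ^ 2 * b by ring] at e₂ e₃
  -- Eliminating `p_{M+1}(q b)` and `p_M(q b)` from `e₁, e₂, e₃` gives the claim multiplied by
  -- `1 - a b q ^ (2 M + 3)`.
  refine mul_left_cancel₀ (C_ne_zero.2 (sub_ne_zero.2 hb.symm)) ?_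
  linear_combination (norm := skip)
    C ((1 - a * b * q ^ (2 * M + 4)) * (1 - b * q ^ (M + 2))) * e₁ +
      C (-(1 - a * b * q ^ (2 * M + 4)) * (a * b * q ^ (M + 2) * (1 - q ^ (M + 1)))) * e₃ +
      C ((1 - a * b * q ^ (2 * M + 3)) *
        (1 - b * q ^ (M + 2) * (1 + a) + a * b * q ^ (2 * M + 3))) * e₂
  simp only [map_sub, map_mul, map_add, map_one, map_pow, map_neg]
  ring

end LittleQJacobi

section LittleQJacobiRoots

variable {q a : ℝ}

theorem littleQJacobi_interlacing_of_precedes (hq0 : 0 < q) (hq1 : q < 1) (ha : 0 < a)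
    (haq : a * q < 1) {c : ℝ} (hc : c < 0) {n : ℕ} {u z : ℕ → ℝ}
    (hu : HasSortedPosRoots (littleQJacobi q a c n) n u)
    (hz : HasSortedPosRoots (littleQJacobi q a (q * c) n) n z) (huz : Precedes n u z) :
    ∃ x, HasSortedPosRoots (littleQJacobi q a c (n + 1)) (n + 1) x ∧ Interlacing n x u := by
  have hcq (k : ℕ) : c * q ^ k < 0 := mul_neg_of_neg_of_pos hc (pow_pos hq0 k)
  have hacq (k : ℕ) : a * c * q ^ k < 0 := by
    rw [mul_assoc]
    exact mul_neg_of_pos_of_neg ha (hcq k)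
  refine exists_interlacing_of_relation hu hz huz
    (littleQJacobi_succ_contiguous_self hq0.ne'
      (fun j => (pow_lt_one₀ hq0.le hq1 j.succ_ne_zero).ne)
      (fun j => (mul_pow_succ_lt_one hq0 hq1 ha haq j).ne) c n)
    (neg_pos.2 (mul_neg_of_neg_of_pos (hcq _) (sub_pos.2 (mul_pow_succ_lt_one hq0 hq1 ha haq n))))
    (fun t _ => by simpa using (hcq (n + 1)).trans one_pos)
    (fun t ht => ?_)
    (natDegree_littleQJacobi hq0 hq1 ha haq hc _)
    (neg_one_pow_mul_leadingCoeff_littleQJacobi_pos hq0 hq1 ha haq hc _)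
    (by rw [eval_zero_littleQJacobi hq0.ne']; exact one_pos)
  have : c * q * t < 0 := mul_neg_of_neg_of_pos (by simpa using hcq 1) ht
  simp only [eval_mul, eval_C, eval_sub, eval_one, eval_X]
  exact mul_neg_of_neg_of_pos (by linarith [hacq (2 * n + 2)]) (by linarith)

theorem littleQJacobi_precedes_of_interlacing (hq0 : 0 < q) (hq1 : q < 1) (ha : 0 < a)
    (haq : a * q < 1) {c : ℝ} (hc : c < 0) {n : ℕ} {x u : ℕ → ℝ}
    (hx : HasSortedPosRoots (littleQJacobi q a (q * c) (n + 1)) (n + 1) x)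
    (hu : HasSortedPosRoots (littleQJacobi q a (q * c) n) n u) (hxu : Interlacing n x u) :
    ∃ y, HasSortedPosRoots (littleQJacobi q a c (n + 1)) (n + 1) y ∧ Precedes (n + 1) y x := by
  have hacq (k : ℕ) : a * c * q ^ k < 0 :=
    mul_neg_of_neg_of_pos (mul_neg_of_pos_of_neg ha hc) (pow_pos hq0 k)
  have hQ : a * c * q ^ (n + 2) * (1 - q ^ (n + 1)) < 0 :=
    mul_neg_of_neg_of_pos (hacq _) (sub_pos.2 (pow_lt_one₀ hq0.le hq1 n.succ_ne_zero))
  exact exists_precedes_of_relation hx hu hxu (littleQJacobi_succ_contiguous_q_mul hq0.ne' c n)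
    (by linarith [hacq (2 * n + 3)]) (fun t _ => by simpa using (hacq (n + 2)).trans one_pos)
    (fun t _ => by simpa using hQ)
    (natDegree_littleQJacobi hq0 hq1 ha haq hc _)
    (neg_one_pow_mul_leadingCoeff_littleQJacobi_pos hq0 hq1 ha haq hc _)
    (by rw [eval_zero_littleQJacobi hq0.ne']; exact one_pos)

theorem littleQJacobi_precedes_q_sq_mul_of_interlacing (hq0 : 0 < q) (hq1 : q < 1) (ha : 0 < a)
    (haq : a * q < 1) {b : ℝ} (hb : b < 0) {n : ℕ} {x u : ℕ → ℝ}
    (hx : HasSortedPosRoots (littleQJacobi q a (q ^ 2 * b) (n + 1)) (n + 1) x)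
    (hu : HasSortedPosRoots (littleQJacobi q a (q ^ 2 * b) n) n u) (hxu : Interlacing n x u) :
    ∃ y, HasSortedPosRoots (littleQJacobi q a b (n + 1)) (n + 1) y ∧ Precedes (n + 1) y x := by
  have hbq (k : ℕ) : b * q ^ k < 0 := mul_neg_of_neg_of_pos hb (pow_pos hq0 k)
  have habq (k : ℕ) : a * b * q ^ k < 0 := by
    rw [mul_assoc]
    exact mul_neg_of_pos_of_neg ha (hbq k)
  have hq : 0 < 1 - q ^ (n + 1) := sub_pos.2 (pow_lt_one₀ hq0.le hq1 n.succ_ne_zero)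
  refine exists_precedes_of_relation hx hu hxu
    (littleQJacobi_succ_contiguous_q_sq_mul hq0.ne'
      (fun j => (pow_lt_one₀ hq0.le hq1 j.succ_ne_zero).ne)
      (fun j => (mul_pow_succ_lt_one hq0 hq1 ha haq j).ne) n ((habq _).trans one_pos).ne)
    (mul_pos (by linarith [habq (2 * n + 4)]) (by linarith [hbq (n + 2)]))
    (fun t _ => ?_) (fun t ht => ?_)
    (natDegree_littleQJacobi hq0 hq1 ha haq hb _)
    (neg_one_pow_mul_leadingCoeff_littleQJacobi_pos hq0 hq1 ha haq hb _)
    (by rw [eval_zero_littleQJacobi hq0.ne']; exact one_pos)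
  · have : 0 < 1 - b * q ^ (n + 2) * (1 + a) + a * b * q ^ (2 * n + 3) := by
      have := mul_neg_of_neg_of_pos (habq (n + 2)) hq
      linear_combination (hbq (n + 2)) + this
    simpa using mul_pos (by linarith [habq (n + 3)]) this
  · have hG₁ :
        a * b * q ^ (n + 2) * (1 - q ^ (n + 1)) * (1 + q - b * q ^ (n + 3) * (1 + a)) < 0 :=
      mul_neg_of_neg_of_pos (mul_neg_of_neg_of_pos (habq _) hq)
        (by linarith [mul_neg_of_neg_of_pos (hbq (n + 3)) (by linarith : 0 < 1 + a)])
    have hG₂ : 0 < a * b ^ 2 * q ^ (n + 4) * (1 - q ^ (n + 1)) * (1 - a * b * q ^ (2 * n + 4)) :=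
      mul_pos (mul_pos (mul_pos (mul_pos ha (by nlinarith)) (pow_pos hq0 _)) hq)
        (by linarith [habq (2 * n + 4)])
    simp only [eval_sub, eval_mul, eval_C, eval_X]
    linarith [mul_pos hG₂ ht]

theorem littleQJacobi_precedes_q_mul (hq0 : 0 < q) (hq1 : q < 1) (ha : 0 < a)
    (haq : a * q < 1) (n : ℕ) {c : ℝ} (hc : c < 0) :
    ∃ u z, HasSortedPosRoots (littleQJacobi q a c n) n u ∧
      HasSortedPosRoots (littleQJacobi q a (q * c) n) n z ∧ Precedes n u z := by
  induction n generalizing c with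
  | zero =>
    have hp (c : ℝ) (hc : c < 0) : HasSortedPosRoots (littleQJacobi q a c 0) 0 0 :=
      .of_natDegree_eq_zero (natDegree_littleQJacobi hq0 hq1 ha haq hc 0)
        (by simpa using neg_one_pow_mul_leadingCoeff_littleQJacobi_pos hq0 hq1 ha haq hc 0) 0
    exact ⟨0, 0, hp c hc, hp _ (mul_neg_of_pos_of_neg hq0 hc),
      fun i hi => absurd hi i.not_lt_zero⟩
  | succ n ih =>
    have hqc : q * c < 0 := mul_neg_of_pos_of_neg hq0 hc
    obtain ⟨u, z, hu, hz, huz⟩ := ih hqc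
    obtain ⟨x, hx, hxu⟩ := littleQJacobi_interlacing_of_precedes hq0 hq1 ha haq hqc hu hz huz
    obtain ⟨y, hy, hyx⟩ := littleQJacobi_precedes_of_interlacing hq0 hq1 ha haq hc hx hu hxu
    exact ⟨y, x, hy, hx, hyx⟩

end LittleQJacobiRoots

/-- for `0 < aq < 1`, `b < 0`, `p_n(x; a, b) ≺ p_n(x; a, q²b)`. -/
theorem littleQJacobi_interlacing_b_q2b (q a b : ℝ) (n : ℕ) (hn : 1 ≤ n)
    (hq0 : 0 < q) (hq1 : q < 1) (ha0 : 0 < a * q) (ha1 : a * q < 1) (hb : b < 0) :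
    ∃ (μ ν : Fin n → ℝ),
      StrictMono μ ∧ StrictMono ν ∧
      (∀ i, 0 < μ i) ∧ (∀ i, 0 < ν i) ∧
      (littleQJacobi q a b n).natDegree = n ∧
      (littleQJacobi q a (q ^ 2 * b) n).natDegree = n ∧
      (littleQJacobi q a b n).roots = ↑(List.ofFn μ) ∧
      (littleQJacobi q a (q ^ 2 * b) n).roots = ↑(List.ofFn ν) ∧
      (∀ i : Fin n, μ i < ν i) ∧
      (∀ (i : ℕ) (h : i + 1 < n), ν ⟨i, by omega⟩ < μ ⟨i + 1, h⟩) := by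
  obtain ⟨N, rfl⟩ : ∃ N, n = N + 1 := ⟨n - 1, by omega⟩
  have ha : 0 < a := pos_of_mul_pos_left ha0 hq0.le
  have hq2b : q ^ 2 * b < 0 := mul_neg_of_pos_of_neg (by positivity) hb
  obtain ⟨u, z, hu, hz, huz⟩ := littleQJacobi_precedes_q_mul hq0 hq1 ha ha1 N hq2b
  obtain ⟨ν, hν, hνu⟩ := littleQJacobi_interlacing_of_precedes hq0 hq1 ha ha1 hq2b hu hz huz
  obtain ⟨μ, hμ, hμν⟩ :=
    littleQJacobi_precedes_q_sq_mul_of_interlacing hq0 hq1 ha ha1 hb hν hu hνu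
  exact ⟨fun i => μ i, fun i => ν i, fun i j hij => hμ.strictMonoOn i.isLt j.isLt hij,
    fun i j hij => hν.strictMonoOn i.isLt j.isLt hij, fun i => hμ.pos i i.isLt,
    fun i => hν.pos i i.isLt, hμ.natDegree_eq, hν.natDegree_eq, hμ.roots_eq_ofFn,
    hν.roots_eq_ofFn, fun i => (hμν i i.isLt).1, fun i hi => (hμν i (by omega)).2 hi⟩
end

section
/- Normalized little q-Jacobi at a = q^{−k}: let q ∈ (0,1), n ≥ 1 an integer, k ∈ {1, …, n}, and b a real number. Then the polynomial identity ∑_{j=0}^{n} [(q^{−n};q)_j / (q;q)_j] (b q^{n−k+1};q)_j (q^{j−k+1};q)_{n−j} (qx)^j = c · (qx)^k · p_{n−k}(x; q^{k}, b) holds, where c = (−1)^k q^{k(k−1)/2 − nk} (b q^{n−k+1};q)_k (q^{k+1};q)_{n−k}. -/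
/-!
Write `n = k + N`. For `j < k` the factor `(q^{j-k+1};q)_{n-j}` contains `1 - q^0`, so only the
terms `j = k + m` with `m ≤ N` survive. Splitting every Pochhammer symbol of length `k + m` at `k`,
and reversing `(q^{-n};q)_k = (-1)^k q^{k(k-1)/2 - nk} (q^{N+1};q)_k`, each surviving term becomes
the constant `c` times the `m`-th term of `p_N(x; q^k, b)`; the leftover factors match because
`(q;q)_k (q^{k+1};q)_N = (q;q)_{k+N} = (q;q)_N (q^{N+1};q)_k`.
-/

open Finset

section QPoch

variable {q : ℝ}

theorem qPoch_add (a : ℝ) (s t : ℕ) :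
    qPoch q a (s + t) = qPoch q a s * qPoch q (a * q ^ s) t := by
  unfold qPoch
  rw [prod_range_add]
  congr 1
  refine prod_congr rfl fun i _ => ?_
  rw [pow_add, mul_assoc]

theorem qPoch_self_add (s t : ℕ) :
    qPoch q q (s + t) = qPoch q q s * qPoch q (q ^ (s + 1)) t := by
  rw [qPoch_add, ← pow_succ']

theorem qPoch_pos_s12 {a : ℝ} (hq0 : 0 ≤ q) (hq1 : q ≤ 1) (ha0 : 0 ≤ a) (ha1 : a < 1) (j : ℕ) :
    0 < qPoch q a j :=
  prod_pos fun _ _ => sub_pos.mpr <|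
    (mul_le_of_le_one_right ha0 (pow_le_one₀ hq0 hq1)).trans_lt ha1

theorem qPoch_eq_zero {a : ℝ} {i j : ℕ} (hij : i < j) (h : a * q ^ i = 1) : qPoch q a j = 0 :=
  prod_eq_zero (mem_range.mpr hij) (by rw [h, sub_self])

theorem qPoch_zpow_neg (hq : q ≠ 0) {n k : ℕ} (hkn : k ≤ n) :
    qPoch q (q ^ (-(n : ℤ))) k =
      (-1) ^ k * q ^ (((k * (k - 1) / 2 : ℕ) : ℤ) - ((n * k : ℕ) : ℤ)) *
        qPoch q (q ^ (n - k + 1)) k := by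
  have hfactor : ∀ i ∈ range k,
      1 - q ^ (-(n : ℤ)) * q ^ i = -1 * (q ^ i / q ^ n) * (1 - q ^ (n - i)) := by
    intro i hi
    rw [zpow_neg, zpow_natCast, ← pow_sub_mul_pow q ((mem_range.mp hi).le.trans hkn)]
    field_simp
    ring
  have hreflect : ∏ i ∈ range k, (1 - q ^ (n - i)) = qPoch q (q ^ (n - k + 1)) k := by
    rw [qPoch, ← prod_range_reflect]
    refine prod_congr rfl fun i hi => ?_
    rw [← pow_add]
    congr 3
    have := mem_range.mp hi
    omega
  rw [qPoch, prod_congr rfl hfactor, prod_mul_distrib, prod_mul_distrib, prod_div_distrib,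
    prod_const, prod_const, card_range, prod_pow_eq_pow_sum, ← sum_range_id, hreflect,
    zpow_sub₀ hq, zpow_natCast, zpow_natCast, ← pow_mul]

/-- The `(k + m)`-th summand of the normalized sum, as the normalizing constant times the `m`-th
coefficient of `p_N(x; q^k, c q^{-N-1})`. -/
theorem qPoch_term_eq (hq : q ≠ 0) (hqq : ∀ j, qPoch q q j ≠ 0) (c : ℝ) {k N m : ℕ}
    (hm : m ≤ N) :
    qPoch q (q ^ (-((k + N : ℕ) : ℤ))) (k + m) / qPoch q q (k + m) * qPoch q c (k + m) *
        qPoch q (q ^ (m + 1)) (N - m) =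
      (-1) ^ k * q ^ (((k * (k - 1) / 2 : ℕ) : ℤ) - (((k + N) * k : ℕ) : ℤ)) * qPoch q c k *
          qPoch q (q ^ (k + 1)) N *
        (qPoch q (q ^ (-(N : ℤ))) m * qPoch q (c * q ^ k) m /
          (qPoch q (q ^ (k + 1)) m * qPoch q q m)) := by
  have hshift : q ^ (-((k + N : ℕ) : ℤ)) * q ^ k = q ^ (-(N : ℤ)) := by
    rw [← zpow_natCast q k, ← zpow_add₀ hq]
    push_cast
    ring_nf
  have hneg : qPoch q (q ^ (-((k + N : ℕ) : ℤ))) (k + m) =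
      (-1) ^ k * q ^ (((k * (k - 1) / 2 : ℕ) : ℤ) - (((k + N) * k : ℕ) : ℤ)) *
        qPoch q (q ^ (N + 1)) k * qPoch q (q ^ (-(N : ℤ))) m := by
    rw [qPoch_add, hshift, qPoch_zpow_neg hq (by omega), Nat.add_sub_cancel_left]
  have htail : qPoch q q N = qPoch q q m * qPoch q (q ^ (m + 1)) (N - m) := by
    rw [← qPoch_self_add, Nat.add_sub_cancel' hm]
  have hswap : qPoch q q k * qPoch q (q ^ (k + 1)) N = qPoch q q N * qPoch q (q ^ (N + 1)) k := by
    rw [← qPoch_self_add, ← qPoch_self_add, add_comm]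
  have hcancel : qPoch q (q ^ (N + 1)) k * qPoch q (q ^ (m + 1)) (N - m) * qPoch q q m =
      qPoch q q k * qPoch q (q ^ (k + 1)) N := by
    rw [hswap, htail]
    ring
  have hkm : qPoch q q (k + m) = qPoch q q k * qPoch q (q ^ (k + 1)) m := qPoch_self_add k m
  have hqk := hqq k
  have hqm := hqq m
  have hkm' : qPoch q (q ^ (k + 1)) m ≠ 0 := right_ne_zero_of_mul (hkm ▸ hqq (k + m))
  rw [hneg, hkm, qPoch_add c k m]
  field_simp
  linear_combination qPoch q c k * qPoch q (c * q ^ k) m * qPoch q (q ^ (-(N : ℤ))) m * hcancel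

end QPoch

theorem littleQJacobi_a_qnegk_general (q b : ℝ) (n k : ℕ)
    (hkn : k ≤ n) (hq0 : 0 < q) (hq1 : q < 1) :
    ∀ x : ℝ,
      ∑ j ∈ Finset.range (n + 1),
          qPoch q (q ^ (-(n : ℤ))) j / qPoch q q j *
            qPoch q (b * q ^ ((n : ℤ) - (k : ℤ) + 1)) j *
            qPoch q (q ^ ((j : ℤ) - (k : ℤ) + 1)) (n - j) * (q * x) ^ j =
        ((-1 : ℝ) ^ k * q ^ (((k * (k - 1) / 2 : ℕ) : ℤ) - ((n * k : ℕ) : ℤ)) *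
            qPoch q (b * q ^ ((n : ℤ) - (k : ℤ) + 1)) k * qPoch q (q ^ (k + 1)) (n - k)) *
          (q * x) ^ k * (littleQJacobi q (q ^ k) b (n - k)).eval x := by
  intro x
  have hq : q ≠ 0 := hq0.ne'
  have hqq : ∀ j, qPoch q q j ≠ 0 := fun j => (qPoch_pos_s12 hq0.le hq1.le hq0.le hq1 j).ne'
  obtain ⟨N, rfl⟩ : ∃ N, n = k + N := ⟨n - k, by omega⟩
  have hb : b * q ^ (((k + N : ℕ) : ℤ) - (k : ℤ) + 1) = b * q ^ (N + 1) := by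
    rw [← zpow_natCast]
    congr 2
    push_cast
    ring
  have hlow : ∀ j ∈ range k, qPoch q (q ^ ((j : ℤ) - (k : ℤ) + 1)) (k + N - j) = 0 := by
    intro j hj
    have hjk := mem_range.mp hj
    refine qPoch_eq_zero (i := k - 1 - j) (by omega) ?_
    rw [← zpow_natCast, ← zpow_add₀ hq,
      show (j : ℤ) - k + 1 + ((k - 1 - j : ℕ) : ℤ) = 0 by omega, zpow_zero]
  rw [hb, Nat.add_sub_cancel_left, littleQJacobi, Polynomial.eval_finsetSum, mul_sum,
    add_assoc, sum_range_add, sum_eq_zero fun j hj => by simp [hlow j hj], zero_add]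
  refine sum_congr rfl fun m hm => ?_
  have hmN : m ≤ N := Nat.lt_succ_iff.mp (mem_range.mp hm)
  have hexp : q ^ (((k + m : ℕ) : ℤ) - (k : ℤ) + 1) = q ^ (m + 1) := by
    rw [← zpow_natCast]
    congr 1
    push_cast
    ring
  simp only [Polynomial.eval_mul, Polynomial.eval_pow, Polynomial.eval_C, Polynomial.eval_X]
  rw [hexp, Nat.add_sub_add_left, ← pow_succ, show q ^ k * b * q ^ (N + 1) = b * q ^ (N + 1) * q ^ k
    by ring, pow_add, ← mul_assoc, qPoch_term_eq hq hqq _ hmN]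
  ring

/-- normalized little q-Jacobi polynomial at `a = q^{−k}`:
`∑_{j=0}^{n} [(q^{−n};q)_j / (q;q)_j] (b q^{n−k+1};q)_j (q^{j−k+1};q)_{n−j} (qx)^j
  = c · (qx)^k · p_{n−k}(x; q^{k}, b)`,
where `c = (−1)^k q^{k(k−1)/2 − nk} (b q^{n−k+1};q)_k (q^{k+1};q)_{n−k}`. -/
theorem littleQJacobi_a_qnegk (q b : ℝ) (n k : ℕ)
    (hn : 1 ≤ n) (hk : 1 ≤ k) (hkn : k ≤ n) (hq0 : 0 < q) (hq1 : q < 1) :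
    ∀ x : ℝ,
      ∑ j ∈ Finset.range (n + 1),
          qPoch q (q ^ (-(n : ℤ))) j / qPoch q q j *
            qPoch q (b * q ^ ((n : ℤ) - (k : ℤ) + 1)) j *
            qPoch q (q ^ ((j : ℤ) - (k : ℤ) + 1)) (n - j) * (q * x) ^ j =
        ((-1 : ℝ) ^ k * q ^ (((k * (k - 1) / 2 : ℕ) : ℤ) - ((n * k : ℕ) : ℤ)) *
            qPoch q (b * q ^ ((n : ℤ) - (k : ℤ) + 1)) k * qPoch q (q ^ (k + 1)) (n - k)) *
          (q * x) ^ k * (littleQJacobi q (q ^ k) b (n - k)).eval x :=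
  littleQJacobi_a_qnegk_general q b n k hkn hq0 hq1
end

section
/- Contiguous relation III: let q ∈ (0,1), n ≥ 1 an integer, and a, b real numbers with a q^j ≠ 1 for j = 1, …, n. Then the polynomial identity q^{n}(1 − a b q^{n}) · p_n(x; a, b) = (1 − a b q^{2n}) · p_n(qx; a, b/q) − (1 − q^{n}) · p_{n−1}(x; a, b) holds for all x. -/
lemma qPoch_shift (q x : ℝ) (k : ℕ) :
    (1 - x) * qPoch q (x * q) k = qPoch q x k * (1 - x * q ^ k) := by
  have h1 : qPoch q x (k + 1) = qPoch q x k * (1 - x * q ^ k) :=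
    Finset.prod_range_succ _ _
  have h2 : qPoch q x (k + 1) = (1 - x) * qPoch q (x * q) k := by
    unfold qPoch
    rw [Finset.prod_range_succ']
    simp only [pow_zero, mul_one]
    rw [mul_comm]
    congr 1
    exact Finset.prod_congr rfl (fun j _ => by ring)
  rw [← h2, h1]

lemma core_scalar (q a b : ℝ) (m k : ℕ) (hq : q ≠ 0) (hne : q ^ (m + 1) ≠ 1)
    (P A B P' : ℝ)
    (hA : (1 - a * b * q ^ (m + 1)) * A = B * (1 - a * b * q ^ (m + 1) * q ^ k))
    (hP : (1 - (q ^ (m + 1))⁻¹) * P' = P * (1 - (q ^ (m + 1))⁻¹ * q ^ k)) :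
    q ^ (m + 1) * (1 - a * b * q ^ (m + 1)) * (P * A) =
      (1 - a * b * q ^ (2 * (m + 1))) * q ^ k * (P * B) -
        (1 - q ^ (m + 1)) * (P' * B) := by
  have hpow : (q : ℝ) ^ (m + 1) ≠ 0 := pow_ne_zero _ hq
  have hz : (q ^ (m + 1))⁻¹ * q ^ (m + 1) = 1 := inv_mul_cancel₀ hpow
  have hc : (1 - (q ^ (m + 1))⁻¹) ≠ 0 := by
    intro h
    apply hne
    have : (q ^ (m + 1))⁻¹ = 1 := by linarith [sub_eq_zero.mp h]
    field_simp at this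
    linarith
  apply mul_left_cancel₀ hc
  linear_combination ((1 - (q ^ (m + 1))⁻¹) * q ^ (m + 1) * P) * hA +
    ((1 - q ^ (m + 1)) * B) * hP + (P * B * (q ^ k - 1)) * hz

lemma littleQJacobi_eval (q a b : ℝ) (n : ℕ) (x : ℝ) :
    (littleQJacobi q a b n).eval x =
      ∑ k ∈ Finset.range (n + 1),
        qPoch q (q ^ (-(n : ℤ))) k * qPoch q (a * b * q ^ (n + 1)) k /
          (qPoch q (a * q) k * qPoch q q k) * (q * x) ^ k := by
  simp [littleQJacobi, Polynomial.eval_finset_sum]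

/-- contiguous relation III:
`q^{n}(1 − a b q^{n}) p_n(x; a, b)
  = (1 − a b q^{2n}) p_n(qx; a, b/q) − (1 − q^{n}) p_{n−1}(x; a, b)`. -/
theorem littleQJacobi_contiguous_III (q a b : ℝ) (n : ℕ) (hn : 1 ≤ n)
    (hq0 : 0 < q) (hq1 : q < 1)
    (ha : ∀ j : ℕ, 1 ≤ j → j ≤ n → a * q ^ j ≠ 1) :
    ∀ x : ℝ,
      q ^ n * (1 - a * b * q ^ n) * (littleQJacobi q a b n).eval x =
        (1 - a * b * q ^ (2 * n)) * (littleQJacobi q a (b / q) n).eval (q * x) -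
          (1 - q ^ n) * (littleQJacobi q a b (n - 1)).eval x := by
  intro x
  obtain ⟨m, rfl⟩ : ∃ m, n = m + 1 := ⟨n - 1, by omega⟩
  have hq : q ≠ 0 := hq0.ne'
  have hpow : (q : ℝ) ^ (m + 1) ≠ 0 := pow_ne_zero _ hq
  have hne : q ^ (m + 1) ≠ 1 :=
    ne_of_lt (pow_lt_one₀ hq0.le hq1 (Nat.succ_ne_zero m))
  rw [Nat.add_sub_cancel, littleQJacobi_eval, littleQJacobi_eval, littleQJacobi_eval]
  have hP0 : qPoch q (q ^ (-(m : ℤ))) (m + 1) = 0 := by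
    apply Finset.prod_eq_zero (Finset.mem_range.mpr (Nat.lt_succ_self m))
    have h : q ^ (-(m : ℤ)) * q ^ m = 1 := by
      rw [zpow_neg, zpow_natCast]
      exact inv_mul_cancel₀ (pow_ne_zero _ hq)
    rw [h, sub_self]
  have hext : (∑ k ∈ Finset.range (m + 1),
      qPoch q (q ^ (-(m : ℤ))) k * qPoch q (a * b * q ^ (m + 1)) k /
        (qPoch q (a * q) k * qPoch q q k) * (q * x) ^ k) =
      ∑ k ∈ Finset.range (m + 1 + 1),
      qPoch q (q ^ (-(m : ℤ))) k * qPoch q (a * b * q ^ (m + 1)) k /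
        (qPoch q (a * q) k * qPoch q q k) * (q * x) ^ k := by
    conv_rhs => rw [Finset.sum_range_succ]
    rw [hP0]
    simp
  rw [hext, Finset.mul_sum, Finset.mul_sum, Finset.mul_sum, ← Finset.sum_sub_distrib]
  apply Finset.sum_congr rfl
  intro k _
  have h1 : a * (b / q) * q ^ (m + 1 + 1) = a * b * q ^ (m + 1) := by
    field_simp
    ring
  have hz1 : q ^ (-((m + 1 : ℕ) : ℤ)) = (q ^ (m + 1))⁻¹ := by
    rw [zpow_neg, zpow_natCast]
  have hz2 : q ^ (-(m : ℤ)) = (q ^ (m + 1))⁻¹ * q := by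
    rw [zpow_neg, zpow_natCast]
    rw [pow_succ, mul_inv]
    field_simp
  rw [h1, hz1, hz2]
  have hA := qPoch_shift q (a * b * q ^ (m + 1)) k
  have e1 : a * b * q ^ (m + 1) * q = a * b * q ^ (m + 1 + 1) := by ring
  rw [e1] at hA
  have hP := qPoch_shift q ((q : ℝ) ^ (m + 1))⁻¹ k
  have key := core_scalar q a b m k hq hne
    (qPoch q (q ^ (-((m + 1 : ℕ) : ℤ))) k) (qPoch q (a * b * q ^ (m + 1 + 1)) k)
    (qPoch q (a * b * q ^ (m + 1)) k) (qPoch q ((q ^ (m + 1))⁻¹ * q) k)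
    (by rw [hz1] at *; exact hA) (by rw [hz1]; exact hP)
  rw [hz1] at key
  linear_combination ((q * x) ^ k / (qPoch q (a * q) k * qPoch q q k)) * key
end
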